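/- Let {b^z : z ∈ Ω} be a holomorphic family of classical scalar Shubin symbols with order function τ. Then the map z ↦ TR(b^z) is holomorphic on Ω ∖ {z ∈ Ω : τ(z) = −2n + j for some j ∈ ℕ₀}. -/

import Mathlib

noncomputable section

open MeasureTheory Complex Filter Topology

/-- `ℝ^n` as a Euclidean space. -/
abbrev Rn (n : ℕ) := EuclideanSpace ℝ (Fin n)

/-- The phase space `ℝ^n × ℝ^n`. -/
abbrev Ph (n : ℕ) := Rn n × Rn n

/-- `ℂ^q`. -/
abbrev Cq (q : ℕ) := EuclideanSpace ℂ (Fin q)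

/-- `B(ℂ^q)`, the `q × q` complex matrices as operators. -/
abbrev Mq (q : ℕ) := Cq q →L[ℂ] Cq q

/-- The Euclidean norm `|(x,ξ)|` on the phase space `ℝ^{2n}`. -/
def phNorm {n : ℕ} (w : Ph n) : ℝ := Real.sqrt (‖w.1‖ ^ 2 + ‖w.2‖ ^ 2)

/-- A smooth strictly positive function `⟨·⟩` on `ℝ^{2n}` which coincides with the
Euclidean norm outside the unit ball. -/
def IsBracket {n : ℕ} (jb : Ph n → ℝ) : Prop :=
  ContDiff ℝ (⊤ : ℕ∞) jb ∧ (∀ w, 0 < jb w) ∧ ∀ w : Ph n, 1 ≤ phNorm w → jb w = phNorm w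

section Symbols

variable {n : ℕ} {V : Type*} [NormedAddCommGroup V] [NormedSpace ℂ V]

/-- The Shubin class `Γ^m(ℝ^n, V)`:  all mixed derivatives of total order `k` are
`O(⟨(x,ξ)⟩^(Re m - k))`. -/
def ShubinSym (n : ℕ) (jb : Ph n → ℝ) (m : ℂ) : Set (Ph n → V) :=
  {a | ContDiff ℝ (⊤ : ℕ∞) a ∧
    ∀ k : ℕ, ∃ C : ℝ, ∀ w : Ph n, ‖iteratedFDeriv ℝ k a w‖ ≤ C * jb w ^ (m.re - k)}

/-- The regularizing symbols `Γ^{-∞} = ⋂ m, Γ^m`. -/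
def SmoothingSym (n : ℕ) (jb : Ph n → ℝ) : Set (Ph n → V) :=
  ⋂ m : ℂ, ShubinSym n jb m

/-- Positive homogeneity of (complex) degree `μ` away from the origin. -/
def IsHom (n : ℕ) (μ : ℂ) (f : Ph n → V) : Prop :=
  ∀ t : ℝ, 0 < t → ∀ w : Ph n, w ≠ 0 → f (t • w) = ((t : ℂ) ^ μ) • f w

/-- A zero excision function:  smooth, `[0,1]`-valued, vanishing near `0` and
equal to `1` outside a compact set. -/
def IsCutoff (n : ℕ) (χ : Ph n → ℝ) : Prop :=
  ContDiff ℝ (⊤ : ℕ∞) χ ∧ (∀ w, 0 ≤ χ w ∧ χ w ≤ 1) ∧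
    (∃ δ : ℝ, 0 < δ ∧ ∀ w : Ph n, phNorm w < δ → χ w = 0) ∧
    (∃ R : ℝ, ∀ w : Ph n, R ≤ phNorm w → χ w = 1)

/-- `a` is a classical Shubin symbol of order `m` with asymptotic expansion `t`:
each `t j` is smooth away from `0` and positively homogeneous of degree `m - j`, and
for every zero excision function `χ` and every `N`, `a - ∑_{j<N} χ • t j ∈ Γ^{m-N}`.
`t 0` is the principal symbol. -/
def IsClassicalWith (n : ℕ) (jb : Ph n → ℝ) (m : ℂ) (a : Ph n → V) (t : ℕ → Ph n → V) : Prop :=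
  a ∈ ShubinSym n jb m ∧
    (∀ j : ℕ, ContDiffOn ℝ (⊤ : ℕ∞) (t j) {w : Ph n | w ≠ 0} ∧ IsHom n (m - j) (t j)) ∧
    ∀ χ : Ph n → ℝ, IsCutoff n χ → ∀ N : ℕ,
      (fun w => a w - ∑ j ∈ Finset.range N, χ w • t j w) ∈ ShubinSym n jb (m - N)

/-- Membership in the class of classical symbols `Γ_cl^m`. -/
def IsClassical (n : ℕ) (jb : Ph n → ℝ) (m : ℂ) (a : Ph n → V) : Prop :=
  ∃ t : ℕ → Ph n → V, IsClassicalWith n jb m a t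

end Symbols

section Quantization

variable {n q : ℕ}

/-- The Fourier transform `û(ξ) = ∫ e^{-i x·ξ} u(x) dx`. -/
def fourierInt {W : Type*} [NormedAddCommGroup W] [NormedSpace ℂ W] [CompleteSpace W]
    (n : ℕ) (u : Rn n → W) (ξ : Rn n) : W :=
  ∫ x : Rn n, Complex.exp (-(Complex.I * ((inner ℝ x ξ : ℝ) : ℂ))) • u x

/-- The quantization `op(a)` of a matrix-valued symbol, acting on (vectors of)
Schwartz functions:  `op(a)u(x) = (2π)^{-n} ∫ e^{i x·ξ} a(x,ξ) û(ξ) dξ`. -/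
def opCl (n q : ℕ) (a : Ph n → Mq q) (u : SchwartzMap (Rn n) (Cq q)) (x : Rn n) : Cq q :=
  (((2 * Real.pi) ^ n)⁻¹ : ℝ) •
    ∫ ξ : Rn n, Complex.exp (Complex.I * ((inner ℝ x ξ : ℝ) : ℂ)) • (a (x, ξ)) (fourierInt n (fun y => u y) ξ)

/-- The quantization `op(a)` of a scalar symbol. -/
def opScalar (n : ℕ) (a : Ph n → ℂ) (u : SchwartzMap (Rn n) ℂ) (x : Rn n) : ℂ :=
  (((2 * Real.pi) ^ n)⁻¹ : ℝ) •
    ∫ ξ : Rn n, Complex.exp (Complex.I * ((inner ℝ x ξ : ℝ) : ℂ)) * (a (x, ξ) * fourierInt n (fun y => u y) ξ)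

/-- `L²(ℝ^n)`. -/
abbrev L2 (n : ℕ) := Lp ℂ 2 (volume : Measure (Rn n))

/-- `L²(ℝ^n)^{⊕q}`. -/
abbrev L2q (n q : ℕ) := Lp (Cq q) 2 (volume : Measure (Rn n))

/-- `A ∈ B(L²(ℝ^n))` is the (unique) bounded extension of `op(a)`. -/
def ExtendsOpScalar (n : ℕ) (a : Ph n → ℂ) (A : L2 n →L[ℂ] L2 n) : Prop :=
  ∀ u : SchwartzMap (Rn n) ℂ, ∀ f : L2 n, (⇑f =ᵐ[volume] ⇑u) → ⇑(A f) =ᵐ[volume] opScalar n a u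

/-- `A ∈ B(L²(ℝ^n)^{⊕q})` is the (unique) bounded extension of `op(a)`. -/
def ExtendsOpCl (n q : ℕ) (a : Ph n → Mq q) (A : L2q n q →L[ℂ] L2q n q) : Prop :=
  ∀ u : SchwartzMap (Rn n) (Cq q), ∀ f : L2q n q, (⇑f =ᵐ[volume] ⇑u) → ⇑(A f) =ᵐ[volume] opCl n q a u

end Quantization
/-- Integration over the unit sphere `S^{2n-1}` of the phase space, expressed through the
solid-ball parametrization: `∫_{S^{2n-1}} g dσ = 2n ∫_{|w| ≤ 1} g(w/|w|) dw`. -/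
def sphereIntS (n : ℕ) (g : Ph n → ℂ) : ℂ :=
  (2 * n : ℂ) * ∫ w in {w : Ph n | phNorm w ≤ 1}, g ((phNorm w)⁻¹ • w)

/-- The matrix trace on `B(ℂ^q)`. -/
def matTr {q : ℕ} (M : Mq q) : ℂ := LinearMap.trace ℂ (Cq q) (M : Cq q →ₗ[ℂ] Cq q)

/-- The Wodzicki residue of a scalar classical symbol of integer order `m` with asymptotic
expansion `t`:  `(2π)^{-n} ∫_{S^{2n-1}} a_{(-2n)} dσ`, where `a_{(-2n)} = t (m + 2n)` is the
homogeneous term of degree `-2n` (zero if the expansion has no such term). -/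
def WResS (n : ℕ) (m : ℤ) (t : ℕ → Ph n → ℂ) : ℂ :=
  if 0 ≤ m + 2 * n then (((2 * Real.pi) ^ n)⁻¹ : ℂ) * sphereIntS n (t (m + 2 * n).toNat) else 0

/-- The Wodzicki residue of a matrix-valued classical symbol of integer order `m` with
asymptotic expansion `t`:  `(2π)^{-n} ∫_{S^{2n-1}} Tr(a_{(-2n)}) dσ`. -/
def WResM (n q : ℕ) (m : ℤ) (t : ℕ → Ph n → Mq q) : ℂ :=
  if 0 ≤ m + 2 * n then
    (((2 * Real.pi) ^ n)⁻¹ : ℂ) * sphereIntS n (fun w => matTr (t (m + 2 * n).toNat w)) else 0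
/-- The Kontsevich–Vishik functional ("finite part integral") of a scalar classical Shubin
symbol `a` of order `z ∉ {-2n + j : j ∈ ℕ}` with asymptotic expansion `t`, computed with a
zero excision function `χ` and any `p` with `Re z - p < -2n`:
`TR(a) = (2π)^{-n} [ ∫_{|w|≤1} a - ∑_{j<p} (2n+z-j)⁻¹ ∫_{S^{2n-1}} a_{(z-j)} dσ
          + ∫_{|w|≥1} (a - ∑_{j<p} χ a_{(z-j)}) ]`. -/
def TRval (n : ℕ) (z : ℂ) (a : Ph n → ℂ) (t : ℕ → Ph n → ℂ) (χ : Ph n → ℝ) (p : ℕ) : ℂ :=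
  (((2 * Real.pi) ^ n)⁻¹ : ℂ) *
    ((∫ w in {w : Ph n | phNorm w ≤ 1}, a w) -
      (∑ j ∈ Finset.range p, ((2 * n : ℂ) + z - (j : ℂ))⁻¹ * sphereIntS n (t j)) +
      ∫ w in {w : Ph n | 1 ≤ phNorm w}, (a w - ∑ j ∈ Finset.range p, χ w • t j w))
/-- A holomorphic family `{b^z : z ∈ Ω}` of scalar classical Shubin symbols with analytic
order function `τ` and homogeneous terms `t z j` of degree `τ(z) - j`:  each `b^z` is
classical with expansion `t z`, the homogeneous terms are smooth in `((x,ξ), z)` and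
holomorphic in `z`, and the remainders `b^z - ∑_{j<N} χ t z j` are `Γ^{τ(z₀)-N+ε}`-valued
holomorphic functions of `z` near each `z₀ ∈ Ω` (locally uniform symbol estimates together
with pointwise holomorphy). -/
def IsHoloFamily (n : ℕ) (jb : Ph n → ℝ) (Ω : Set ℂ) (τ : ℂ → ℂ)
    (b : ℂ → Ph n → ℂ) (t : ℂ → ℕ → Ph n → ℂ) : Prop :=
  IsOpen Ω ∧ DifferentiableOn ℂ τ Ω ∧
    (∀ z ∈ Ω, IsClassicalWith n jb (τ z) (b z) (t z)) ∧
    (∀ j : ℕ, ContDiffOn ℝ (⊤ : ℕ∞) (fun p : Ph n × ℂ => t p.2 j p.1)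
      ({w : Ph n | w ≠ 0} ×ˢ Ω)) ∧
    (∀ j : ℕ, ∀ w : Ph n, w ≠ 0 → DifferentiableOn ℂ (fun z => t z j w) Ω) ∧
    ∀ z₀ ∈ Ω, ∀ N : ℕ, ∀ ε : ℝ, 0 < ε → ∃ V ∈ 𝓝 z₀, V ⊆ Ω ∧
      (∀ z ∈ V, (τ z).re < (τ z₀).re + ε) ∧
      ∀ χ : Ph n → ℝ, IsCutoff n χ →
        (∃ C : ℕ → ℝ, ∀ z ∈ V, ∀ k : ℕ, ∀ w : Ph n,
          ‖iteratedFDeriv ℝ k (fun w' => b z w' - ∑ j ∈ Finset.range N, χ w' • t z j w') w‖ ≤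
            C k * jb w ^ ((τ z₀).re - N + ε - k)) ∧
        ∀ w : Ph n, DifferentiableOn ℂ
          (fun z => b z w - ∑ j ∈ Finset.range N, χ w • t z j w) V

/-! `TR(b^z)` is a finite combination of three parametric integrals: of `b^z` over the unit
ball, of the homogeneous terms `b^z_{(τ(z)-j)}` over the unit sphere (with the coefficients
`(2n + τ(z) - j)⁻¹`, holomorphic as long as `τ(z) ∉ -2n + ℕ₀`), and of the remainder
`b^z - ∑_{j<p} χ b^z_{(τ(z)-j)}` outside the ball. Near `z₀` each integrand is holomorphic
in `z` and dominated, uniformly in `z`, by an integrable function: `⟨w⟩^{Re τ(z₀) + 1}` on the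
ball, a constant on the sphere by compactness, and `|w|^{Re τ(z₀) - p + ε}` with
`Re τ(z₀) - p + ε < -2n` outside the ball. A dominated integral of holomorphic functions is
holomorphic, since Cauchy's estimate bounds the `z`-derivatives by the same majorant and one
may differentiate under the integral sign. -/

open Metric

section PhaseSpaceNorm

variable {n : ℕ}

lemma phNorm_nonneg (w : Ph n) : 0 ≤ phNorm w := Real.sqrt_nonneg _

lemma norm_le_phNorm (w : Ph n) : ‖w‖ ≤ phNorm w := by
  rw [Prod.norm_def, phNorm]
  refine max_le ?_ ?_ <;> rw [Real.le_sqrt (norm_nonneg _) (by positivity)]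
  · nlinarith [sq_nonneg ‖w.2‖]
  · nlinarith [sq_nonneg ‖w.1‖]

lemma phNorm_pos {w : Ph n} (hw : w ≠ 0) : 0 < phNorm w :=
  (norm_pos_iff.2 hw).trans_le (norm_le_phNorm w)

lemma ne_zero_of_one_le_phNorm {w : Ph n} (hw : 1 ≤ phNorm w) : w ≠ 0 := by
  rintro rfl
  norm_num [phNorm] at hw

lemma phNorm_smul {c : ℝ} (hc : 0 ≤ c) (w : Ph n) : phNorm (c • w) = c * phNorm w := by
  simp only [phNorm, Prod.smul_fst, Prod.smul_snd, norm_smul, Real.norm_of_nonneg hc, mul_pow,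
    ← mul_add, Real.sqrt_mul (sq_nonneg c), Real.sqrt_sq hc]

lemma phNorm_inv_smul_self {w : Ph n} (hw : w ≠ 0) : phNorm ((phNorm w)⁻¹ • w) = 1 := by
  rw [phNorm_smul (inv_nonneg.2 (phNorm_nonneg w)), inv_mul_cancel₀ (phNorm_pos hw).ne']

lemma continuous_phNorm : Continuous (phNorm (n := n)) :=
  Real.continuous_sqrt.comp ((continuous_fst.norm.pow 2).add (continuous_snd.norm.pow 2))

lemma isCompact_phNorm_le (r : ℝ) : IsCompact {w : Ph n | phNorm w ≤ r} :=
  (isCompact_closedBall (0 : Ph n) r).of_isClosed_subset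
    (isClosed_le continuous_phNorm continuous_const)
    fun w hw => mem_closedBall_zero_iff.2 ((norm_le_phNorm w).trans hw)

lemma isCompact_phNorm_eq_one : IsCompact {w : Ph n | phNorm w = 1} :=
  (isCompact_phNorm_le 1).of_isClosed_subset (isClosed_eq continuous_phNorm continuous_const)
    fun _ hw => hw.le

instance : (volume : Measure (Ph n)).IsAddHaarMeasure := Measure.prod.instIsAddHaarMeasure _ _

lemma integrableOn_phNorm_rpow {s : ℝ} (hs : s < -(2 * n : ℝ)) :
    IntegrableOn (fun w : Ph n => phNorm w ^ s) {w | 1 ≤ phNorm w} := by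
  have hdim : (Module.finrank ℝ (Ph n) : ℝ) < -s := by
    rw [Module.finrank_prod, finrank_euclideanSpace_fin]
    push_cast
    linarith
  have hint : Integrable (fun w : Ph n => 2 ^ (-s) * (1 + ‖w‖) ^ s) := by
    simpa only [neg_neg] using (integrable_one_add_norm hdim).const_mul (2 ^ (-s))
  refine hint.integrableOn.mono' ((continuous_phNorm.measurable.pow_const s).aestronglyMeasurable)
    ((ae_restrict_iff' (measurableSet_le measurable_const continuous_phNorm.measurable)).2
      (.of_forall fun w hw => ?_))
  have hw' : (1 + ‖w‖) / 2 ≤ phNorm w := by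
    linarith [norm_le_phNorm w, show 1 ≤ phNorm w from hw]
  have hs0 : s ≤ 0 := by linarith [(Nat.cast_nonneg n : (0 : ℝ) ≤ n)]
  rw [Real.norm_of_nonneg (Real.rpow_nonneg (phNorm_nonneg w) s)]
  calc phNorm w ^ s ≤ ((1 + ‖w‖) / 2) ^ s := Real.rpow_le_rpow_of_nonpos (by positivity) hw' hs0
    _ = 2 ^ (-s) * (1 + ‖w‖) ^ s := by
        rw [Real.div_rpow (by positivity) (by norm_num), Real.rpow_neg (by norm_num)]; ring

end PhaseSpaceNorm

section ParametricIntegral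

variable {α E : Type*} [MeasurableSpace α] {μ : Measure α}
  [NormedAddCommGroup E] [NormedSpace ℂ E] {F : ℂ → α → E} {U : Set ℂ}

lemma aestronglyMeasurable_deriv_of_ae_differentiableAt (hU : IsOpen U) {z₀ : ℂ} (hz₀ : z₀ ∈ U)
    (hmeas : ∀ z ∈ U, AEStronglyMeasurable (F z) μ)
    (hdiff : ∀ᵐ a ∂μ, DifferentiableAt ℂ (F · a) z₀) :
    AEStronglyMeasurable (fun a => deriv (F · a) z₀) μ := by
  obtain ⟨x, hx⟩ := exists_seq_tendsto (𝓝[≠] z₀)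
  obtain ⟨N, hN⟩ :=
    eventually_atTop.1 (hx.eventually (mem_nhdsWithin_of_mem_nhds (hU.mem_nhds hz₀)))
  refine aestronglyMeasurable_of_tendsto_ae atTop
    (f := fun m a => slope (F · a) z₀ (x (m + N))) (fun m => ?_) ?_
  · simp only [slope_def_module]
    exact ((hmeas _ (hN _ (Nat.le_add_left N m))).sub (hmeas z₀ hz₀)).const_smul _
  · filter_upwards [hdiff] with a ha
    exact (hasDerivAt_iff_tendsto_slope.1 ha.hasDerivAt).comp ((tendsto_add_atTop_iff_nat N).2 hx)

lemma differentiableOn_integral_of_dominated [CompleteSpace E] (hU : IsOpen U) {g : α → ℝ}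
    (hg : Integrable g μ)
    (hmeas : ∀ z ∈ U, AEStronglyMeasurable (F z) μ)
    (hbound : ∀ᵐ a ∂μ, ∀ z ∈ U, ‖F z a‖ ≤ g a)
    (hholo : ∀ᵐ a ∂μ, DifferentiableOn ℂ (F · a) U) :
    DifferentiableOn ℂ (fun z => ∫ a, F z a ∂μ) U := by
  intro z₀ hz₀
  obtain ⟨ε, hε, hεU⟩ := Metric.isOpen_iff.1 hU z₀ hz₀
  have hr : 0 < ε / 3 := by positivity
  have hdisc : ∀ x ∈ ball z₀ (ε / 3), closedBall x (ε / 3) ⊆ U := fun x hx y hy => by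
    rw [mem_ball] at hx
    rw [mem_closedBall] at hy
    exact hεU (mem_ball.2 (by linarith [dist_triangle y x z₀]))
  have hsub : ball z₀ (ε / 3) ⊆ U := fun x hx => hdisc x hx (mem_closedBall_self hr.le)
  -- Cauchy's estimate turns the uniform bound `g` into the bound `g / (ε / 3)` on derivatives.
  have hderiv :
      ∀ᵐ a ∂μ, ∀ x ∈ ball z₀ (ε / 3), ‖deriv (F · a) x‖ ≤ g a / (ε / 3) := by
    filter_upwards [hbound, hholo] with a hFa hda x hx
    refine Complex.norm_deriv_le_of_forall_mem_sphere_norm_le hr ?_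
      fun z hz => hFa z (hdisc x hx (sphere_subset_closedBall hz))
    exact (hda.mono (by rw [closure_ball x hr.ne']; exact hdisc x hx)).diffContOnCl
  have H := hasDerivAt_integral_of_dominated_loc_of_deriv_le (ball_mem_nhds z₀ hr)
    (eventually_of_mem (hU.mem_nhds hz₀) hmeas)
    (hg.mono' (hmeas z₀ hz₀) (hbound.mono fun a ha => ha z₀ hz₀))
    (aestronglyMeasurable_deriv_of_ae_differentiableAt hU hz₀ hmeas
      (hholo.mono fun a ha => ha.differentiableAt (hU.mem_nhds hz₀)))
    hderiv (hg.div_const _)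
    (hholo.mono fun a ha x hx => (ha.differentiableAt (hU.mem_nhds (hsub hx))).hasDerivAt)
  exact H.2.differentiableAt.differentiableWithinAt

end ParametricIntegral

section PhaseSpaceIntegrals

variable {n : ℕ} {U : Set ℂ}

lemma differentiableOn_setIntegral_of_isCompact {F : ℂ → Ph n → ℂ} (hU : IsOpen U)
    {K : Set (Ph n)} (hK : IsCompact K) {g : Ph n → ℝ} (hg : Continuous g)
    (hcont : ∀ z ∈ U, Continuous (F z)) (hbound : ∀ z ∈ U, ∀ w, ‖F z w‖ ≤ g w)
    (hholo : ∀ w, DifferentiableOn ℂ (F · w) U) :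
    DifferentiableOn ℂ (fun z => ∫ w in K, F z w) U :=
  differentiableOn_integral_of_dominated hU (hg.continuousOn.integrableOn_compact hK)
    (fun z hz => (hcont z hz).aestronglyMeasurable) (ae_of_all _ fun w z hz => hbound z hz w)
    (ae_of_all _ hholo)

lemma differentiableOn_setIntegral_one_le_phNorm {F : ℂ → Ph n → ℂ} (hU : IsOpen U)
    {C s : ℝ} (hs : s < -(2 * n : ℝ))
    (hcont : ∀ z ∈ U, ContinuousOn (F z) {w | 1 ≤ phNorm w})
    (hbound : ∀ z ∈ U, ∀ w, 1 ≤ phNorm w → ‖F z w‖ ≤ C * phNorm w ^ s)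
    (hholo : ∀ w, 1 ≤ phNorm w → DifferentiableOn ℂ (F · w) U) :
    DifferentiableOn ℂ (fun z => ∫ w in {w | 1 ≤ phNorm w}, F z w) U := by
  have hS : MeasurableSet {w : Ph n | 1 ≤ phNorm w} :=
    measurableSet_le measurable_const continuous_phNorm.measurable
  exact differentiableOn_integral_of_dominated hU ((integrableOn_phNorm_rpow hs).const_mul C)
    (fun z hz => (hcont z hz).aestronglyMeasurable hS)
    ((ae_restrict_iff' hS).2 (.of_forall fun w hw z hz => hbound z hz w hw))
    ((ae_restrict_iff' hS).2 (.of_forall hholo))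

lemma differentiableOn_sphereIntS (hn : 0 < n) {g : ℂ → Ph n → ℂ} (hU : IsOpen U)
    {K : Set ℂ} (hK : IsCompact K) (hUK : U ⊆ K)
    (hcont : ContinuousOn (fun p : Ph n × ℂ => g p.2 p.1) ({w | w ≠ 0} ×ˢ K))
    (hholo : ∀ w, w ≠ 0 → DifferentiableOn ℂ (g · w) U) :
    DifferentiableOn ℂ (fun z => sphereIntS n (g z)) U := by
  have : Nontrivial (Rn n) := Module.nontrivial_of_finrank_pos (R := ℝ) (by simpa using hn)
  have : (𝓝[≠] (0 : Ph n)).NeBot := inferInstance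
  have hne : ∀ᵐ w ∂(volume.restrict {w : Ph n | phNorm w ≤ 1}), w ≠ 0 :=
    ae_restrict_of_ae (Measure.ae_ne volume 0)
  have hproj : ContinuousOn (fun w : Ph n => (phNorm w)⁻¹ • w) {0}ᶜ :=
    (continuous_phNorm.continuousOn.inv₀ fun w hw => (phNorm_pos hw).ne').smul continuousOn_id
  have hsphere_ne : ∀ w ∈ {w : Ph n | phNorm w = 1}, w ≠ 0 :=
    fun w hw => ne_zero_of_one_le_phNorm hw.ge
  have hsub : {w : Ph n | phNorm w = 1} ×ˢ K ⊆ {w : Ph n | w ≠ 0} ×ˢ K :=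
    Set.prod_mono hsphere_ne subset_rfl
  obtain ⟨C, hC⟩ := (isCompact_phNorm_eq_one.prod hK).exists_bound_of_continuousOn
    (hcont.mono hsub)
  have hint : Integrable (fun _ : Ph n => C) (volume.restrict {w : Ph n | phNorm w ≤ 1}) :=
    integrableOn_const (isCompact_phNorm_le 1).measure_lt_top.ne
  have hmeas : ∀ z ∈ U, AEStronglyMeasurable (fun w : Ph n => g z ((phNorm w)⁻¹ • w))
      (volume.restrict {w : Ph n | phNorm w ≤ 1}) := by
    intro z hz
    have hgz : ContinuousOn (g z) {0}ᶜ :=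
      hcont.comp (f := fun w : Ph n => (w, z)) (continuousOn_id.prodMk continuousOn_const)
        fun w hw => ⟨hw, hUK hz⟩
    have := (hgz.comp hproj fun w hw => hsphere_ne _ (phNorm_inv_smul_self hw)).aestronglyMeasurable
      (μ := volume) (measurableSet_singleton (0 : Ph n)).compl
    rw [restrict_compl_singleton] at this
    exact this.restrict
  have hbound : ∀ᵐ w ∂(volume.restrict {w : Ph n | phNorm w ≤ 1}), ∀ z ∈ U,
      ‖g z ((phNorm w)⁻¹ • w)‖ ≤ C :=
    hne.mono fun w hw z hz => hC ((phNorm w)⁻¹ • w, z) ⟨phNorm_inv_smul_self hw, hUK hz⟩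
  have hholo' : ∀ᵐ w ∂(volume.restrict {w : Ph n | phNorm w ≤ 1}),
      DifferentiableOn ℂ (fun z => g z ((phNorm w)⁻¹ • w)) U :=
    hne.mono fun w hw => hholo _ (hsphere_ne _ (phNorm_inv_smul_self hw))
  exact (differentiableOn_integral_of_dominated hU hint hmeas hbound hholo').const_mul _

end PhaseSpaceIntegrals

lemma differentiableAt_TRval {n p : ℕ} {τ : ℂ → ℂ} {b : ℂ → Ph n → ℂ}
    {t : ℂ → ℕ → Ph n → ℂ} {χ : Ph n → ℝ} {z : ℂ} (hτ : DifferentiableAt ℂ τ z)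
    (hpoles : ∀ j ∈ Finset.range p, (2 * n : ℂ) + τ z - j ≠ 0)
    (hball : DifferentiableAt ℂ (fun z => ∫ w in {w : Ph n | phNorm w ≤ 1}, b z w) z)
    (hsphere : ∀ j ∈ Finset.range p, DifferentiableAt ℂ (fun z => sphereIntS n (t z j)) z)
    (hext : DifferentiableAt ℂ (fun z => ∫ w in {w : Ph n | 1 ≤ phNorm w},
      (b z w - ∑ j ∈ Finset.range p, χ w • t z j w)) z) :
    DifferentiableAt ℂ (fun z => TRval n (τ z) (b z) (t z) χ p) z :=
  ((hball.sub (.fun_sum fun j hj => ((((differentiableAt_const _).add hτ).sub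
    (differentiableAt_const _)).inv (hpoles j hj)).mul (hsphere j hj))).add hext).const_mul _

namespace IsHoloFamily

variable {n : ℕ} {jb : Ph n → ℝ} {Ω : Set ℂ} {τ : ℂ → ℂ} {b : ℂ → Ph n → ℂ}
  {t : ℂ → ℕ → Ph n → ℂ} {z₀ : ℂ} {χ : Ph n → ℝ}

lemma eventually_differentiableAt_integral_phNorm_le (hfam : IsHoloFamily n jb Ω τ b t)
    (hjb : IsBracket jb) (hz₀ : z₀ ∈ Ω) (hχ : IsCutoff n χ) :
    ∀ᶠ z in 𝓝 z₀,
      DifferentiableAt ℂ (fun z => ∫ w in {w : Ph n | phNorm w ≤ 1}, b z w) z := by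
  obtain ⟨-, -, hcl, -, -, hrem⟩ := hfam
  -- the remainder estimate with `N = 0` (an empty sum, so `χ` is irrelevant) bounds `b^z` itself
  obtain ⟨V, hV, hVΩ, -, hrem⟩ := hrem z₀ hz₀ 0 1 one_pos
  obtain ⟨⟨C, hC⟩, hholo⟩ := hrem χ hχ
  have hg : Continuous fun w => C 0 * jb w ^ ((τ z₀).re + 1) :=
    continuous_const.mul (hjb.1.continuous.rpow_const fun w => .inl (hjb.2.1 w).ne')
  refine (differentiableOn_setIntegral_of_isCompact isOpen_interior (isCompact_phNorm_le 1) hg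
    (fun z hz => (hcl z (hVΩ (interior_subset hz))).1.1.continuous)
    (fun z hz w => by simpa using hC z (interior_subset hz) 0 w)
    (fun w => by simpa using (hholo w).mono interior_subset)).eventually_differentiableAt
    (interior_mem_nhds.2 hV)

lemma eventually_differentiableAt_sphereIntS (hfam : IsHoloFamily n jb Ω τ b t) (hn : 0 < n)
    (hz₀ : z₀ ∈ Ω) (j : ℕ) :
    ∀ᶠ z in 𝓝 z₀, DifferentiableAt ℂ (fun z => sphereIntS n (t z j)) z := by
  obtain ⟨hΩ, -, -, hsmooth, hholo, -⟩ := hfam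
  obtain ⟨R, hR, hRΩ⟩ := nhds_basis_closedBall.mem_iff.1 (hΩ.mem_nhds hz₀)
  exact (differentiableOn_sphereIntS hn isOpen_ball (isCompact_closedBall z₀ R)
    ball_subset_closedBall ((hsmooth j).continuousOn.mono (Set.prod_mono subset_rfl hRΩ))
    fun w hw => (hholo j w hw).mono (ball_subset_closedBall.trans hRΩ)
    ).eventually_differentiableAt (ball_mem_nhds z₀ hR)

lemma eventually_differentiableAt_integral_remainder (hfam : IsHoloFamily n jb Ω τ b t)
    (hjb : IsBracket jb) (hz₀ : z₀ ∈ Ω) (hχ : IsCutoff n χ) {p : ℕ}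
    (hp : (τ z₀).re - p < -(2 * n : ℝ)) :
    ∀ᶠ z in 𝓝 z₀, DifferentiableAt ℂ (fun z => ∫ w in {w : Ph n | 1 ≤ phNorm w},
      (b z w - ∑ j ∈ Finset.range p, χ w • t z j w)) z := by
  obtain ⟨ε, hε, hεp⟩ : ∃ ε, 0 < ε ∧ (τ z₀).re - p + ε < -(2 * n : ℝ) :=
    ⟨(-(2 * n : ℝ) - ((τ z₀).re - p)) / 2, by linarith, by linarith⟩
  obtain ⟨-, -, hcl, -, -, hrem⟩ := hfam
  obtain ⟨V, hV, hVΩ, -, hrem⟩ := hrem z₀ hz₀ p ε hε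
  obtain ⟨⟨C, hC⟩, hholo⟩ := hrem χ hχ
  have hcont : ∀ z ∈ Ω, ContinuousOn (fun w => b z w - ∑ j ∈ Finset.range p, χ w • t z j w)
      {w | 1 ≤ phNorm w} := fun z hz =>
    (hcl z hz).1.1.continuous.continuousOn.sub <| continuousOn_finsetSum _ fun j _ =>
      (hχ.1.continuous.continuousOn.smul ((hcl z hz).2.1 j).1.continuousOn).mono
        fun _ hw => ne_zero_of_one_le_phNorm hw
  refine (differentiableOn_setIntegral_one_le_phNorm isOpen_interior (C := C 0)
    (s := (τ z₀).re - p + ε) hεp (fun z hz => hcont z (hVΩ (interior_subset hz)))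
    (fun z hz w hw => by simpa [hjb.2.2 w hw] using hC z (interior_subset hz) 0 w)
    (fun w _ => (hholo w).mono interior_subset)).eventually_differentiableAt
    (interior_mem_nhds.2 hV)

end IsHoloFamily

/-- For a holomorphic family `{b^z : z ∈ Ω}` of scalar classical Shubin
symbols with order function `τ`, the map `z ↦ TR(b^z)` is holomorphic on
`Ω ∖ {z : τ(z) = -2n + j, j ∈ ℕ₀}`  (locally, computed with any zero excision function `χ`
and any admissible `p`). -/
theorem statement10 (n : ℕ) (hn : 0 < n) (jb : Ph n → ℝ) (hjb : IsBracket jb)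
    (Ω : Set ℂ) (τ : ℂ → ℂ) (b : ℂ → Ph n → ℂ) (t : ℂ → ℕ → Ph n → ℂ)
    (hfam : IsHoloFamily n jb Ω τ b t) :
    ∀ z₀ ∈ Ω, (¬ ∃ j : ℕ, τ z₀ = -(2 * n : ℂ) + j) →
      ∀ χ : Ph n → ℝ, IsCutoff n χ → ∀ p : ℕ, (τ z₀).re - p < -(2 * n : ℝ) →
        ∃ V ∈ 𝓝 z₀, V ⊆ Ω ∧
          DifferentiableOn ℂ (fun z => TRval n (τ z) (b z) (t z) χ p) V := by
  intro z₀ hz₀ hτz₀ χ hχ p hp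
  have hΩ : Ω ∈ 𝓝 z₀ := hfam.1.mem_nhds hz₀
  have hτ : ∀ᶠ z in 𝓝 z₀, DifferentiableAt ℂ τ z := hfam.2.1.eventually_differentiableAt hΩ
  have hpoles : ∀ᶠ z in 𝓝 z₀, ∀ j ∈ Finset.range p, (2 * n : ℂ) + τ z - j ≠ 0 :=
    (eventually_all_finset _).2 fun j _ =>
      have hcont : ContinuousAt (fun z => (2 * n : ℂ) + τ z - j) z₀ :=
        (continuousAt_const.add hτ.self_of_nhds.continuousAt).sub continuousAt_const
      hcont.eventually_ne fun h => hτz₀ ⟨j, by linear_combination h⟩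
  have hTR : ∀ᶠ z in 𝓝 z₀,
      z ∈ Ω ∧ DifferentiableAt ℂ (fun z => TRval n (τ z) (b z) (t z) χ p) z := by
    filter_upwards [hΩ, hτ, hpoles,
      hfam.eventually_differentiableAt_integral_phNorm_le hjb hz₀ hχ,
      (eventually_all_finset _).2 fun j _ => hfam.eventually_differentiableAt_sphereIntS hn hz₀ j,
      hfam.eventually_differentiableAt_integral_remainder hjb hz₀ hχ hp]
      with z hzΩ hτz hpz hball hsphere hext
    exact ⟨hzΩ, differentiableAt_TRval hτz hpz hball hsphere hext⟩
  exact ⟨_, hTR, fun z hz => hz.1, fun z hz => hz.2.differentiableWithinAt⟩
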